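/- Let g : ℝ₊ → ℝ be C^{2n}, β ≥ 0, γ ≥ β²/4, and set ψ_g(x) = g(x + β√x + γ) + g(x − β√x + γ). Then ψ_g is C^n on ℝ₊ and its n-th derivative satisfies ψ_g^{(n)}(x) = ψ_{g^{(n)}}(x) + Σ_{j=1}^n C(n,j) β^{2j} ∫_0^1 g^{(n+j)}(x + β(2u−1)√x + γ) · (u − u²)^{j−1}/(j−1)! du. -/

import Mathlib

open Real intervalIntegral

open Set Filter Topology MeasureTheory Interval

/-! Put `θ(x, u) = x + β (2u - 1) √x + γ`, which runs from `x - β√x + γ` to `x + β√x + γ` and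
stays nonnegative because `γ ≥ β²/4`, and `J m i x = ∫₀¹ g⁽ᵐ⁾(θ(x, u)) (u - u²)ⁱ / i! du`.
Differentiating `J m i` in `x` produces the factor `1 + β (2u - 1) / (2√x)`; its singular part is
removed by integrating by parts against `(u - u²)ⁱ⁺¹ / (i+1)!`, whose derivative is
`(1 - 2u) (u - u²)ⁱ / i!` and which vanishes at both ends, so that
`∂ₓ J m i = J (m+1) i + β² J (m+2) (i+1)`. The fundamental theorem of calculus along `θ(x, ·)`
likewise turns `∂ₓ ψ_{g⁽ᵏ⁾} - ψ_{g⁽ᵏ⁺¹⁾}` into `β² J (k+2) 0`, and Pascal's rule then shows that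
the claimed `k`-th derivatives `Fₖ` satisfy `∂ₓ Fₖ = Fₖ₊₁` for `x > 0`. At `x = 0`, where `√` is
not differentiable, the one-sided derivative follows from the continuity of `Fₖ₊₁`.
-/

section General

variable {E : Type*} [NormedAddCommGroup E] [NormedSpace ℝ E]

theorem continuousOn_intervalIntegral_of_continuousOn_uncurry {X : Type*} [TopologicalSpace X]
    {F : X → ℝ → E} {S : Set X} {a b : ℝ} (hab : a ≤ b)
    (hF : ContinuousOn (Function.uncurry F) (S ×ˢ Icc a b)) :
    ContinuousOn (fun x => ∫ t in a..b, F x t) S := by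
  rw [continuousOn_iff_continuous_domRestrict]
  have hclamp : Continuous (Function.uncurry fun (x : S) t => F x (projIcc a b hab t)) :=
    hF.comp_continuous (f := fun p : S × ℝ => ((p.1 : X), (projIcc a b hab p.2 : ℝ)))
      (by fun_prop) fun p => ⟨p.1.2, (projIcc a b hab p.2).2⟩
  refine (continuous_parametric_intervalIntegral_of_continuous' (μ := volume) hclamp a b).congr
    fun x => ?_
  refine integral_congr fun t ht => ?_
  rw [uIcc_of_le hab] at ht
  simp [projIcc_of_mem hab ht]

theorem hasDerivAt_intervalIntegral_of_continuousOn_uncurry {F F' : ℝ → ℝ → E} {U : Set ℝ}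
    {a b x₀ : ℝ} (hU : IsOpen U) (hx₀ : x₀ ∈ U) (hab : a ≤ b)
    (hF : ContinuousOn (Function.uncurry F) (U ×ˢ Icc a b))
    (hF' : ContinuousOn (Function.uncurry F') (U ×ˢ Icc a b))
    (hderiv : ∀ x ∈ U, ∀ t ∈ Icc a b, HasDerivAt (F · t) (F' x t) x) :
    HasDerivAt (fun x => ∫ t in a..b, F x t) (∫ t in a..b, F' x₀ t) x₀ := by
  obtain ⟨δ, hδ, hball⟩ := Metric.isOpen_iff.1 hU x₀ hx₀
  have hK : Metric.closedBall x₀ (δ / 2) ⊆ U :=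
    (Metric.closedBall_subset_ball (half_lt_self hδ)).trans hball
  obtain ⟨C, hC⟩ := (isCompact_closedBall x₀ (δ / 2)).prod isCompact_Icc
    |>.exists_bound_of_continuousOn (hF'.mono (prod_mono hK subset_rfl))
  have hIoc : Ι a b ⊆ Icc a b := by rw [uIoc_of_le hab]; exact Ioc_subset_Icc_self
  refine (hasDerivAt_integral_of_dominated_loc_of_deriv_le (bound := fun _ => C)
    (Metric.ball_mem_nhds x₀ (half_pos hδ)) ?_ ?_ ?_ ?_ intervalIntegrable_const ?_).2
  · filter_upwards [hU.mem_nhds hx₀] with x hx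
    exact ((hF.uncurry_left x hx).mono hIoc).aestronglyMeasurable measurableSet_uIoc
  · exact (hF.uncurry_left x₀ hx₀).intervalIntegrable_of_Icc hab
  · exact ((hF'.uncurry_left x₀ hx₀).mono hIoc).aestronglyMeasurable measurableSet_uIoc
  · refine ae_of_all _ fun t ht x hx => hC (x, t) ⟨Metric.ball_subset_closedBall hx, hIoc ht⟩
  · exact ae_of_all _ fun t ht x hx =>
      hderiv x (hK (Metric.ball_subset_closedBall hx)) t (hIoc ht)

theorem hasDerivWithinAt_Ici_of_hasDerivAt_Ioi {f f' : ℝ → E} {a x : ℝ}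
    (hderiv : ∀ y > a, HasDerivAt f (f' y) y) (hf : ContinuousWithinAt f (Ici a) a)
    (hf' : ContinuousWithinAt f' (Ici a) a) (hx : a ≤ x) :
    HasDerivWithinAt f (f' x) (Ici a) x := by
  rcases hx.eq_or_lt with rfl | hx
  · refine hasDerivWithinAt_Ici_of_tendsto_deriv
      (fun y hy => (hderiv y hy).differentiableAt.differentiableWithinAt)
      (hf.mono Ioi_subset_Ici_self) self_mem_nhdsWithin ?_
    exact (hf'.mono Ioi_subset_Ici_self).tendsto.congr'
      (eventually_nhdsWithin_of_forall fun y hy => (hderiv y hy).deriv.symm)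
  · exact (hderiv x hx).hasDerivWithinAt

end General

section IteratedDeriv

variable {𝕜 : Type*} [NontriviallyNormedField 𝕜] {F : Type*} [NormedAddCommGroup F]
  [NormedSpace 𝕜 F] {f : 𝕜 → F} {s : Set 𝕜} {D : ℕ → 𝕜 → F} {n : ℕ}

theorem eqOn_iteratedDerivWithin_of_hasDerivWithinAt (hs : UniqueDiffOn 𝕜 s)
    (h0 : EqOn f (D 0) s) (hD : ∀ k < n, ∀ x ∈ s, HasDerivWithinAt (D k) (D (k + 1) x) s x) :
    ∀ k ≤ n, EqOn (iteratedDerivWithin k f s) (D k) s := by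
  intro k hk
  induction k with
  | zero => simpa using h0
  | succ k ih =>
    intro x hx
    rw [iteratedDerivWithin_succ, derivWithin_congr (ih (by omega)) (ih (by omega) hx)]
    exact (hD k (by omega) x hx).derivWithin (hs x hx)

theorem contDiffOn_of_hasDerivWithinAt_seq (hs : UniqueDiffOn 𝕜 s)
    (h0 : EqOn f (D 0) s) (hD : ∀ k < n, ∀ x ∈ s, HasDerivWithinAt (D k) (D (k + 1) x) s x)
    (hDn : ContinuousOn (D n) s) : ContDiffOn 𝕜 n f s := by
  have heq := eqOn_iteratedDerivWithin_of_hasDerivWithinAt hs h0 hD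
  have hdiff : ∀ k < n, DifferentiableOn 𝕜 (D k) s := fun k hk x hx =>
    (hD k hk x hx).differentiableWithinAt
  refine contDiffOn_of_continuousOn_differentiableOn_deriv (fun k hk => ?_) (fun k hk => ?_)
  · norm_cast at hk
    refine ContinuousOn.congr ?_ (heq k hk)
    rcases hk.lt_or_eq with hk | rfl
    · exact (hdiff k hk).continuousOn
    · exact hDn
  · norm_cast at hk
    exact (hdiff k hk).congr (heq k hk.le)

end IteratedDeriv

theorem HasDerivAt.iteratedDerivWithin_comp {g : ℝ → ℝ} {s : Set ℝ} {N m : ℕ}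
    (hg : ContDiffOn ℝ N g s) (hs : UniqueDiffOn ℝ s) (hm : m < N) {φ : ℝ → ℝ} {φ' x : ℝ}
    (hφ : HasDerivAt φ φ' x) (hφs : ∀ᶠ y in 𝓝 x, φ y ∈ s) :
    HasDerivAt (fun y => iteratedDerivWithin m g s (φ y))
      (iteratedDerivWithin (m + 1) g s (φ x) * φ') x := by
  have hgm : HasDerivWithinAt (iteratedDerivWithin m g s) (iteratedDerivWithin (m + 1) g s (φ x))
      s (φ x) := by
    rw [iteratedDerivWithin_succ]
    exact (hg.differentiableOn_iteratedDerivWithin (by exact_mod_cast hm) hs _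
      hφs.self_of_nhds).hasDerivWithinAt
  exact (hgm.comp x hφ.hasDerivWithinAt (mapsTo_preimage φ s)).hasDerivAt hφs

theorem Finset.sum_range_succ_choose_succ_mul {R : Type*} [Semiring R] (A : ℕ → R) (k : ℕ) :
    ∑ i ∈ range (k + 1), ((k + 1).choose (i + 1) : R) * A i
      = A 0 + ∑ i ∈ range k, (k.choose (i + 1) : R) * (A i + A (i + 1)) := by
  simp only [Nat.choose_succ_succ', Nat.cast_add, add_mul, sum_add_distrib, mul_add]
  rw [sum_range_succ', sum_range_succ (fun i => (k.choose (i + 1) : R) * A i)]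
  simp [add_comm, add_left_comm]

namespace SqrtShift

noncomputable def psi (g : ℝ → ℝ) (β γ x : ℝ) : ℝ := g (x + β * √x + γ) + g (x - β * √x + γ)

noncomputable def interp (β γ x u : ℝ) : ℝ := x + β * (2 * u - 1) * √x + γ

noncomputable def weight (i : ℕ) (u : ℝ) : ℝ := (u - u ^ 2) ^ i / i.factorial

noncomputable def weightedIntegral (g : ℝ → ℝ) (β γ : ℝ) (m i : ℕ) (x : ℝ) : ℝ :=
  ∫ u in (0 : ℝ)..1, iteratedDerivWithin m g (Ici 0) (interp β γ x u) * weight i u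

-- `Fₖ`, the claimed `k`-th derivative of `psi g`, indexed by `i = j - 1`.
noncomputable def psiDeriv (g : ℝ → ℝ) (β γ : ℝ) (k : ℕ) (x : ℝ) : ℝ :=
  psi (iteratedDerivWithin k g (Ici 0)) β γ x +
    ∑ i ∈ Finset.range k, (k.choose (i + 1) : ℝ) * β ^ (2 * (i + 1)) *
      weightedIntegral g β γ (k + i + 1) i x

section Interp

variable {β γ : ℝ}

theorem interp_nonneg (hγ : β ^ 2 / 4 ≤ γ) {x u : ℝ} (hx : 0 ≤ x) (hu : u ∈ Icc (0 : ℝ) 1) :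
    0 ≤ interp β γ x u := by
  have hsq : √x ^ 2 = x := sq_sqrt hx
  rw [interp]
  nlinarith [sq_nonneg (√x + β * (2 * u - 1) / 2),
    mul_nonneg (mul_nonneg (sq_nonneg β) hu.1) (sub_nonneg.2 hu.2)]

theorem interp_one (x : ℝ) : interp β γ x 1 = x + β * √x + γ := by
  rw [interp]; ring

theorem interp_zero (x : ℝ) : interp β γ x 0 = x - β * √x + γ := by
  rw [interp]; ring

theorem continuous_interp : Continuous (Function.uncurry (interp β γ)) := by
  unfold interp; fun_prop

theorem hasDerivAt_interp_left {x : ℝ} (hx : 0 < x) (u : ℝ) :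
    HasDerivAt (interp β γ · u) (1 + β * (2 * u - 1) / (2 * √x)) x := by
  have h := (hasDerivAt_id' x).add ((hasDerivAt_sqrt hx.ne').const_mul (β * (2 * u - 1)))
  exact (h.add_const γ).congr_deriv (by field_simp)

theorem hasDerivAt_interp_right (x u : ℝ) :
    HasDerivAt (interp β γ x) (2 * β * √x) u := by
  have := (((((hasDerivAt_id' u).const_mul 2).sub_const 1).const_mul β).mul_const √x).const_add x
  exact (this.add_const γ).congr_deriv (by ring)

end Interp

theorem weight_zero (u : ℝ) : weight 0 u = 1 := by simp [weight]

theorem weight_succ_zero (i : ℕ) : weight (i + 1) 0 = 0 := by simp [weight]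

theorem weight_succ_one (i : ℕ) : weight (i + 1) 1 = 0 := by simp [weight]

@[fun_prop]
theorem continuous_weight (i : ℕ) : Continuous (weight i) := by
  unfold weight; fun_prop

theorem hasDerivAt_weight_succ (i : ℕ) (u : ℝ) :
    HasDerivAt (weight (i + 1)) ((1 - 2 * u) * weight i u) u := by
  have := ((((hasDerivAt_id' u).fun_sub (hasDerivAt_pow 2 u)).fun_pow (i + 1)).div_const
    ((i + 1).factorial : ℝ))
  refine this.congr_deriv ?_
  simp only [weight, Nat.factorial_succ, Nat.cast_mul]
  field_simp
  push_cast
  ring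

section Derivatives

variable {g : ℝ → ℝ} {β γ : ℝ} {N : ℕ}

theorem eventually_interp_mem_Ici (hγ : β ^ 2 / 4 ≤ γ) {x u : ℝ} (hx : 0 < x)
    (hu : u ∈ Icc (0 : ℝ) 1) : ∀ᶠ y in 𝓝 x, interp β γ y u ∈ Ici 0 := by
  filter_upwards [Ioi_mem_nhds hx] with y hy using interp_nonneg hγ (le_of_lt hy) hu

theorem continuousOn_comp_interp (hg : ContDiffOn ℝ N g (Ici 0)) (hγ : β ^ 2 / 4 ≤ γ) {m : ℕ}
    (hm : m ≤ N) :
    ContinuousOn (Function.uncurry fun x u => iteratedDerivWithin m g (Ici 0) (interp β γ x u))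
      (Ici 0 ×ˢ Icc 0 1) :=
  (hg.continuousOn_iteratedDerivWithin (by exact_mod_cast hm) (uniqueDiffOn_Ici 0)).comp
    continuous_interp.continuousOn fun p hp => interp_nonneg hγ hp.1 hp.2

theorem intervalIntegrable_comp_interp_mul (hg : ContDiffOn ℝ N g (Ici 0))
    (hγ : β ^ 2 / 4 ≤ γ) {m : ℕ} (hm : m ≤ N) {x : ℝ} (hx : 0 ≤ x) {h : ℝ → ℝ}
    (hh : Continuous h) :
    IntervalIntegrable (fun u => iteratedDerivWithin m g (Ici 0) (interp β γ x u) * h u)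
      volume 0 1 :=
  (((continuousOn_comp_interp hg hγ hm).uncurry_left x hx).mul hh.continuousOn)
    |>.intervalIntegrable_of_Icc zero_le_one

theorem hasDerivAt_comp_interp_right (hg : ContDiffOn ℝ N g (Ici 0)) (hγ : β ^ 2 / 4 ≤ γ)
    {p : ℕ} (hp : p < N) {x u : ℝ} (hx : 0 ≤ x) (hu : u ∈ Ioo (0 : ℝ) 1) :
    HasDerivAt (fun v => iteratedDerivWithin p g (Ici 0) (interp β γ x v))
      (iteratedDerivWithin (p + 1) g (Ici 0) (interp β γ x u) * (2 * β * √x)) u :=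
  (hasDerivAt_interp_right x u).iteratedDerivWithin_comp hg (uniqueDiffOn_Ici 0) hp <| by
    filter_upwards [Icc_mem_nhds hu.1 hu.2] with v hv using interp_nonneg hγ hx hv

theorem iteratedDerivWithin_sub_eq (hg : ContDiffOn ℝ N g (Ici 0)) (hγ : β ^ 2 / 4 ≤ γ)
    {p : ℕ} (hp : p < N) {x : ℝ} (hx : 0 ≤ x) :
    iteratedDerivWithin p g (Ici 0) (x + β * √x + γ)
        - iteratedDerivWithin p g (Ici 0) (x - β * √x + γ)
      = 2 * β * √x * weightedIntegral g β γ (p + 1) 0 x := by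
  rw [← interp_one, ← interp_zero, weightedIntegral, ← intervalIntegral.integral_const_mul]
  simp only [weight_zero, mul_one]
  rw [← integral_eq_sub_of_hasDerivAt_of_le zero_le_one
    ((continuousOn_comp_interp hg hγ hp.le).uncurry_left x hx)
    (fun u hu => hasDerivAt_comp_interp_right hg hγ hp hx hu)
    (intervalIntegrable_comp_interp_mul hg hγ hp hx continuous_const)]
  exact integral_congr fun u _ => by ring

theorem integral_comp_interp_mul_weight (hg : ContDiffOn ℝ N g (Ici 0)) (hγ : β ^ 2 / 4 ≤ γ)
    {p : ℕ} (hp : p < N) (i : ℕ) {x : ℝ} (hx : 0 ≤ x) :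
    ∫ u in (0 : ℝ)..1, iteratedDerivWithin p g (Ici 0) (interp β γ x u) * ((2 * u - 1) * weight i u)
      = 2 * β * √x * weightedIntegral g β γ (p + 1) (i + 1) x := by
  have hibp := integral_mul_deriv_eq_deriv_mul_of_hasDerivAt
    (continuous_weight (i + 1)).continuousOn
    (by simpa using (continuousOn_comp_interp hg hγ hp.le).uncurry_left x hx)
    (fun u _ => hasDerivAt_weight_succ i u)
    (fun u hu => hasDerivAt_comp_interp_right hg hγ hp hx (by simpa using hu))
    ((by fun_prop : Continuous fun u : ℝ => (1 - 2 * u) * weight i u).intervalIntegrable 0 1)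
    (intervalIntegrable_comp_interp_mul hg hγ hp hx continuous_const)
  simp only [weight_succ_one, weight_succ_zero, zero_mul, sub_self, zero_sub] at hibp
  rw [weightedIntegral, ← intervalIntegral.integral_const_mul]
  calc _ = -∫ u in (0 : ℝ)..1, (1 - 2 * u) * weight i u
          * iteratedDerivWithin p g (Ici 0) (interp β γ x u) := by
        rw [← intervalIntegral.integral_neg]; exact integral_congr fun u _ => by ring
    _ = _ := by
        rw [← hibp]
        exact integral_congr fun u _ => by ring

theorem continuousOn_weightedIntegral (hg : ContDiffOn ℝ N g (Ici 0)) (hγ : β ^ 2 / 4 ≤ γ)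
    {m : ℕ} (hm : m ≤ N) (i : ℕ) : ContinuousOn (weightedIntegral g β γ m i) (Ici 0) :=
  continuousOn_intervalIntegral_of_continuousOn_uncurry zero_le_one <|
    (continuousOn_comp_interp hg hγ hm).mul
      (continuous_weight i |>.comp continuous_snd).continuousOn

theorem hasDerivAt_weightedIntegral (hg : ContDiffOn ℝ N g (Ici 0)) (hγ : β ^ 2 / 4 ≤ γ)
    {m : ℕ} (hm : m + 2 ≤ N) (i : ℕ) {x : ℝ} (hx : 0 < x) :
    HasDerivAt (weightedIntegral g β γ m i)
      (weightedIntegral g β γ (m + 1) i x + β ^ 2 * weightedIntegral g β γ (m + 2) (i + 1) x)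
      x := by
  have hIoi : Ioi (0 : ℝ) ×ˢ Icc (0 : ℝ) 1 ⊆ Ici 0 ×ˢ Icc 0 1 :=
    prod_mono Ioi_subset_Ici_self le_rfl
  have hderiv := hasDerivAt_intervalIntegral_of_continuousOn_uncurry isOpen_Ioi hx zero_le_one
    (F := fun y u => iteratedDerivWithin m g (Ici 0) (interp β γ y u) * weight i u)
    (F' := fun y u => iteratedDerivWithin (m + 1) g (Ici 0) (interp β γ y u)
      * (1 + β * (2 * u - 1) / (2 * √y)) * weight i u)
    (((continuousOn_comp_interp hg hγ (by omega)).mul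
      (continuous_weight i |>.comp continuous_snd).continuousOn).mono hIoi)
    (by
      refine (((continuousOn_comp_interp hg hγ (by omega)).mono hIoi).mul ?_).mul
        (continuous_weight i |>.comp continuous_snd).continuousOn
      exact ContinuousOn.add continuousOn_const <| by
        fun_prop (disch := exact fun p hp => by have : 0 < √p.1 := sqrt_pos.2 hp.1; positivity))
    (fun y hy u hu => ((hasDerivAt_interp_left hy u).iteratedDerivWithin_comp hg
      (uniqueDiffOn_Ici 0) (by omega) (eventually_interp_mem_Ici hγ hy hu)).mul_const _)
  refine hderiv.congr_deriv ?_
  have hs : √x ≠ 0 := (sqrt_pos.2 hx).ne'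
  have hsplit := integral_comp_interp_mul_weight hg hγ (p := m + 1) (by omega) i hx.le
  calc _ = ∫ u in (0 : ℝ)..1, (iteratedDerivWithin (m + 1) g (Ici 0) (interp β γ x u) * weight i u
          + β / (2 * √x) * (iteratedDerivWithin (m + 1) g (Ici 0) (interp β γ x u)
            * ((2 * u - 1) * weight i u))) := integral_congr fun u _ => by ring
    _ = weightedIntegral g β γ (m + 1) i x
          + β / (2 * √x) * (2 * β * √x * weightedIntegral g β γ (m + 2) (i + 1) x) := by
        rw [intervalIntegral.integral_add
          (intervalIntegrable_comp_interp_mul hg hγ (by omega) hx.le (continuous_weight i))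
          ((intervalIntegrable_comp_interp_mul hg hγ (by omega) hx.le (by fun_prop)).const_mul _),
          intervalIntegral.integral_const_mul, hsplit]
        rfl
    _ = _ := by field_simp

theorem psi_eq_interp (G : ℝ → ℝ) :
    psi G β γ = fun x => G (interp β γ x 1) + G (interp β γ x 0) := by
  funext x; rw [psi, interp_one, interp_zero]

theorem continuousOn_psi (hg : ContDiffOn ℝ N g (Ici 0)) (hγ : β ^ 2 / 4 ≤ γ) {k : ℕ}
    (hk : k ≤ N) : ContinuousOn (psi (iteratedDerivWithin k g (Ici 0)) β γ) (Ici 0) := by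
  rw [psi_eq_interp]
  exact ((continuousOn_comp_interp hg hγ hk).uncurry_right 1 (by simp)).add
    ((continuousOn_comp_interp hg hγ hk).uncurry_right 0 (by simp))

theorem hasDerivAt_psi (hg : ContDiffOn ℝ N g (Ici 0)) (hγ : β ^ 2 / 4 ≤ γ) {k : ℕ}
    (hk : k + 2 ≤ N) {x : ℝ} (hx : 0 < x) :
    HasDerivAt (psi (iteratedDerivWithin k g (Ici 0)) β γ)
      (psi (iteratedDerivWithin (k + 1) g (Ici 0)) β γ x
        + β ^ 2 * weightedIntegral g β γ (k + 2) 0 x) x := by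
  have hnode {u : ℝ} (hu : u ∈ Icc (0 : ℝ) 1) :=
    (hasDerivAt_interp_left (β := β) (γ := γ) hx u).iteratedDerivWithin_comp hg
      (uniqueDiffOn_Ici 0) (m := k) (by omega) (eventually_interp_mem_Ici hγ hx hu)
  rw [psi_eq_interp]
  refine ((hnode (by simp)).add (hnode (by simp))).congr_deriv ?_
  have hdiff := iteratedDerivWithin_sub_eq hg hγ (p := k + 1) (by omega) hx.le
  have hs : √x ≠ 0 := (sqrt_pos.2 hx).ne'
  rw [psi, interp_one, interp_zero]
  field_simp
  linear_combination β * hdiff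

theorem continuousOn_psiDeriv (hg : ContDiffOn ℝ N g (Ici 0)) (hγ : β ^ 2 / 4 ≤ γ) {k : ℕ}
    (hk : 2 * k ≤ N) : ContinuousOn (psiDeriv g β γ k) (Ici 0) :=
  (continuousOn_psi hg hγ (by omega)).add <| continuousOn_finsetSum _ fun i hi =>
    continuousOn_const.mul
      (continuousOn_weightedIntegral hg hγ (by simp at hi; omega) i)

theorem hasDerivAt_psiDeriv (hg : ContDiffOn ℝ N g (Ici 0)) (hγ : β ^ 2 / 4 ≤ γ) {k : ℕ}
    (hk : 2 * k + 2 ≤ N) {x : ℝ} (hx : 0 < x) :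
    HasDerivAt (psiDeriv g β γ k) (psiDeriv g β γ (k + 1) x) x := by
  have hsum := HasDerivAt.fun_sum (u := Finset.range k) fun i hi =>
    (hasDerivAt_weightedIntegral hg hγ (m := k + i + 1) (by simp at hi; omega) i hx).const_mul
      ((k.choose (i + 1) : ℝ) * β ^ (2 * (i + 1)))
  refine ((hasDerivAt_psi hg hγ (by omega) hx).add hsum).congr_deriv ?_
  rw [psiDeriv, add_assoc]
  congr 1
  simp only [mul_assoc]
  rw [Finset.sum_range_succ_choose_succ_mul]
  congr 1
  refine Finset.sum_congr rfl fun i _ => ?_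
  rw [show k + 1 + i + 1 = k + i + 1 + 1 by ring, show k + 1 + (i + 1) + 1 = k + i + 1 + 2 by ring]
  ring

theorem hasDerivWithinAt_psiDeriv (hg : ContDiffOn ℝ N g (Ici 0)) (hγ : β ^ 2 / 4 ≤ γ) {k : ℕ}
    (hk : 2 * k + 2 ≤ N) {x : ℝ} (hx : 0 ≤ x) :
    HasDerivWithinAt (psiDeriv g β γ k) (psiDeriv g β γ (k + 1) x) (Ici 0) x :=
  hasDerivWithinAt_Ici_of_hasDerivAt_Ioi (fun _ hy => hasDerivAt_psiDeriv hg hγ hk hy)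
    (continuousOn_psiDeriv hg hγ (by omega) 0 self_mem_Ici)
    (continuousOn_psiDeriv hg hγ (by omega) 0 self_mem_Ici) hx

end Derivatives

end SqrtShift

open SqrtShift in
theorem stmt_5 (n : ℕ) (g : ℝ → ℝ) (hg : ContDiffOn ℝ (2 * n) g (Set.Ici 0))
    (β γ : ℝ) (hγ : β ^ 2 / 4 ≤ γ) :
    ContDiffOn ℝ n
        (fun x => g (x + β * Real.sqrt x + γ) + g (x - β * Real.sqrt x + γ)) (Set.Ici 0) ∧
      ∀ x : ℝ, 0 ≤ x →
        iteratedDerivWithin n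
            (fun y => g (y + β * Real.sqrt y + γ) + g (y - β * Real.sqrt y + γ))
            (Set.Ici 0) x
          = (iteratedDerivWithin n g (Set.Ici 0) (x + β * Real.sqrt x + γ)
              + iteratedDerivWithin n g (Set.Ici 0) (x - β * Real.sqrt x + γ))
            + ∑ j ∈ Finset.Icc 1 n, (n.choose j : ℝ) * β ^ (2 * j) *
                ∫ u in (0:ℝ)..1,
                  iteratedDerivWithin (n + j) g (Set.Ici 0)
                      (x + β * (2 * u - 1) * Real.sqrt x + γ)
                    * (u - u ^ 2) ^ (j - 1) / (Nat.factorial (j - 1)) := by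
  have hg' : ContDiffOn ℝ (2 * n : ℕ) g (Ici 0) := by exact_mod_cast hg
  have h0 : EqOn (fun x => g (x + β * √x + γ) + g (x - β * √x + γ)) (psiDeriv g β γ 0) (Ici 0) :=
    fun x _ => by simp [psiDeriv, psi]
  have hD : ∀ k < n, ∀ x ∈ Ici (0 : ℝ),
      HasDerivWithinAt (psiDeriv g β γ k) (psiDeriv g β γ (k + 1) x) (Ici 0) x :=
    fun k hk x hx => hasDerivWithinAt_psiDeriv hg' hγ (by omega) hx
  refine ⟨contDiffOn_of_hasDerivWithinAt_seq (uniqueDiffOn_Ici 0) h0 hD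
    (continuousOn_psiDeriv hg' hγ le_rfl), fun x hx => ?_⟩
  rw [eqOn_iteratedDerivWithin_of_hasDerivWithinAt (uniqueDiffOn_Ici 0) h0 hD n le_rfl hx,
    psiDeriv, psi, ← Finset.Ico_add_one_right_eq_Icc, Finset.sum_Ico_eq_sum_range]
  simp only [weightedIntegral, weight, interp, add_tsub_cancel_right, add_comm 1, mul_div_assoc,
    add_assoc]
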